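/- Let G = (V,E) be a finite simple connected graph of order n ≥ 2. Then the independence number of the splitting graph S(G) equals n + β₀*(G), i.e., β₀(S(G)) = n + β₀*(G). -/

import Mathlib

/-- A finset `S` is independent in `G` if no two of its vertices are adjacent. -/
def IsIndepFinset {V : Type*} (G : SimpleGraph V) (S : Finset V) : Prop :=
  ∀ u ∈ S, ∀ v ∈ S, ¬ G.Adj u v

open Classical in
/-- The neighborhood `N(S)` of a finset `S` in `G`: all vertices adjacent to some vertex of `S`. -/
noncomputable def nbhdSet {V : Type*} [Fintype V] (G : SimpleGraph V) (S : Finset V) : Finset V :=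
  Finset.univ.filter fun v => ∃ u ∈ S, G.Adj u v

/-- The independence number `β₀(G)`: maximum size of an independent set. -/
noncomputable def indepNum {V : Type*} [Fintype V] (G : SimpleGraph V) : ℕ :=
  sSup {k : ℕ | ∃ S : Finset V, IsIndepFinset G S ∧ S.card = k}

/-- A finset `C` is a vertex cover of `G` if it meets every edge. -/
def IsVertexCover {V : Type*} (G : SimpleGraph V) (C : Finset V) : Prop :=
  ∀ u v, G.Adj u v → u ∈ C ∨ v ∈ C

/-- The vertex cover number `α₀(G)`: minimum size of a vertex cover. -/
noncomputable def coverNum {V : Type*} [Fintype V] (G : SimpleGraph V) : ℕ :=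
  sInf {k : ℕ | ∃ C : Finset V, IsVertexCover G C ∧ C.card = k}

/-- `β₀*(G) = max {|S| - |N(S)| : S independent in G}`. -/
noncomputable def betaStar {V : Type*} [Fintype V] (G : SimpleGraph V) : ℤ :=
  sSup {k : ℤ | ∃ S : Finset V,
    IsIndepFinset G S ∧ k = (S.card : ℤ) - ((nbhdSet G S).card : ℤ)}

/-- The splitting graph `S(G)`: vertex set `V ⊔ V'`, with the edges of `G` together with an
edge between the copy `v'` of `v` and `u` for every edge `vu` of `G`. -/
def splittingGraph {V : Type*} (G : SimpleGraph V) : SimpleGraph (V ⊕ V) where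
  Adj x y :=
    match x, y with
    | Sum.inl a, Sum.inl b => G.Adj a b
    | Sum.inl a, Sum.inr b => G.Adj a b
    | Sum.inr a, Sum.inl b => G.Adj a b
    | Sum.inr _, Sum.inr _ => False
  symm := by
    constructor
    rintro (a | a) (b | b) h
    · exact G.adj_symm h
    · exact G.adj_symm h
    · exact G.adj_symm h
    · exact h
  loopless := by
    constructor
    rintro (a | a) h
    · exact G.loopless.irrefl a h
    · exact h

/-! An independent set of `S(G)` is `S ⊔ B'` with `S` independent in `G` and `B` disjoint from
`N(S)`, since the copies `V'` are pairwise non-adjacent and `v'` is adjacent exactly to `N(v)`.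
For fixed `S` the best choice is `B = V \ N(S)`, so `β₀(S(G)) = max_S (|S| + n - |N(S)|)`. -/

lemma isIndepFinset_empty {V : Type*} (G : SimpleGraph V) : IsIndepFinset G ∅ := by
  simp [IsIndepFinset]

lemma mem_nbhdSet {V : Type*} [Fintype V] {G : SimpleGraph V} {S : Finset V} {v : V} :
    v ∈ nbhdSet G S ↔ ∃ u ∈ S, G.Adj u v := by
  simp [nbhdSet]

section Extremal

variable {V : Type*} [Fintype V] (G : SimpleGraph V)

lemma bddAbove_indepCards :
    BddAbove {k : ℕ | ∃ S : Finset V, IsIndepFinset G S ∧ S.card = k} :=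
  ⟨Fintype.card V, by rintro k ⟨S, -, rfl⟩; exact S.card_le_univ⟩

lemma card_le_indepNum {S : Finset V} (hS : IsIndepFinset G S) : S.card ≤ indepNum G :=
  le_csSup (bddAbove_indepCards G) ⟨S, hS, rfl⟩

lemma exists_isIndepFinset_card_eq_indepNum :
    ∃ S : Finset V, IsIndepFinset G S ∧ S.card = indepNum G := by
  refine Nat.sSup_mem ?_ (bddAbove_indepCards G)
  exact ⟨0, ∅, isIndepFinset_empty G, rfl⟩

lemma bddAbove_surplus :
    BddAbove {k : ℤ | ∃ S : Finset V,
      IsIndepFinset G S ∧ k = (S.card : ℤ) - ((nbhdSet G S).card : ℤ)} := by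
  refine ⟨Fintype.card V, ?_⟩
  rintro k ⟨S, -, rfl⟩
  have := S.card_le_univ
  omega

lemma le_betaStar {S : Finset V} (hS : IsIndepFinset G S) :
    (S.card : ℤ) - (nbhdSet G S).card ≤ betaStar G :=
  le_csSup (bddAbove_surplus G) ⟨S, hS, rfl⟩

lemma exists_isIndepFinset_eq_betaStar :
    ∃ S : Finset V, IsIndepFinset G S ∧ betaStar G = (S.card : ℤ) - (nbhdSet G S).card := by
  refine Int.csSup_mem ?_ (bddAbove_surplus G)
  exact ⟨_, ∅, isIndepFinset_empty G, rfl⟩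

end Extremal

lemma isIndepFinset_splittingGraph_disjSum_iff {V : Type*} [Fintype V] (G : SimpleGraph V)
    (S B : Finset V) :
    IsIndepFinset (splittingGraph G) (S.disjSum B) ↔
      IsIndepFinset G S ∧ Disjoint B (nbhdSet G S) := by
  constructor
  · intro h
    refine ⟨fun u hu v hv =>
      h (.inl u) (Finset.inl_mem_disjSum.2 hu) (.inl v) (Finset.inl_mem_disjSum.2 hv), ?_⟩
    refine Finset.disjoint_left.2 fun b hb hbN => ?_
    obtain ⟨a, ha, hab⟩ := mem_nbhdSet.1 hbN
    exact h (.inl a) (Finset.inl_mem_disjSum.2 ha) (.inr b) (Finset.inr_mem_disjSum.2 hb) hab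
  · rintro ⟨hS, hB⟩ (a | a) ha (b | b) hb hab <;>
      simp only [Finset.inl_mem_disjSum, Finset.inr_mem_disjSum] at ha hb
    · exact hS a ha b hb hab
    · exact Finset.disjoint_left.1 hB hb (mem_nbhdSet.2 ⟨a, ha, hab⟩)
    · exact Finset.disjoint_left.1 hB ha (mem_nbhdSet.2 ⟨b, hb, hab.symm⟩)
    · exact hab

theorem stmt0_general {V : Type*} [Fintype V] (G : SimpleGraph V) :
    (indepNum (splittingGraph G) : ℤ) = (Fintype.card V : ℤ) + betaStar G := by
  classical
  apply le_antisymm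
  · obtain ⟨T, hT, hcard⟩ := exists_isIndepFinset_card_eq_indepNum (splittingGraph G)
    rw [← T.toLeft_disjSum_toRight, isIndepFinset_splittingGraph_disjSum_iff] at hT
    have hright : T.toRight.card + (nbhdSet G T.toLeft).card ≤ Fintype.card V := by
      rw [← Finset.card_union_of_disjoint hT.2]
      exact Finset.card_le_univ _
    have hsurplus := le_betaStar G hT.1
    rw [← hcard, ← T.card_toLeft_add_card_toRight]
    omega
  · obtain ⟨S, hS, hβ⟩ := exists_isIndepFinset_eq_betaStar G
    have hT := (isIndepFinset_splittingGraph_disjSum_iff G S (nbhdSet G S)ᶜ).2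
      ⟨hS, disjoint_compl_left⟩
    have hle := card_le_indepNum _ hT
    rw [Finset.card_disjSum] at hle
    have hcompl := (nbhdSet G S).card_compl_add_card
    omega

theorem stmt0 {V : Type*} [Fintype V] (G : SimpleGraph V)
    (hconn : G.Connected) (hn : 2 ≤ Fintype.card V) :
    (indepNum (splittingGraph G) : ℤ) = (Fintype.card V : ℤ) + betaStar G :=
  stmt0_general G
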